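/- arXiv:2210.07743 — 2 statements merged into one kernel-verified Lean document; each statement's English description precedes it below -/
import Mathlib

section
/- Let α be a badly approximable irrational with convergent denominators q_k. If there exist δ > 0 and 0 < c < 1 such that for infinitely many k, sup_{ε ∈ (-δ,δ)} P_{q_k}(α, ε) < c, then liminf_{N→∞} P_N(α) = 0, where P_{q_k}(α,ε) := ∏_{r=1}^{q_k} 2|sin(π(rα + (-1)^k ε/q_k))|. -/
open Filter Real

/-- The Sudler product `P_N(α) = ∏_{r=1}^N 2 |sin (π r α)|`. -/
noncomputable def sudler (α : ℝ) (N : ℕ) : ℝ :=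
  ∏ r ∈ Finset.Icc 1 N, 2 * |Real.sin (Real.pi * r * α)|

/-- The Gauss map `x ↦ {1/x}`. -/
noncomputable def gaussMap (x : ℝ) : ℝ := Int.fract x⁻¹

/-- The `n`-th partial quotient `a_n` (for `n ≥ 1`) of the continued fraction
expansion of `α`, obtained by iterating the Gauss map. -/
noncomputable def partQuot (α : ℝ) (n : ℕ) : ℕ :=
  (⌊(gaussMap^[n - 1] (Int.fract α))⁻¹⌋).toNat

/-- The denominators `q_k` of the continued fraction convergents of `α`:
`q_0 = 1`, `q_1 = a_1`, `q_{k+2} = a_{k+2} q_{k+1} + q_k`. -/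
noncomputable def qden (α : ℝ) : ℕ → ℕ
  | 0 => 1
  | 1 => partQuot α 1
  | (n + 2) => partQuot α (n + 2) * qden α (n + 1) + qden α n

/-- The numerators `p_k` of the continued fraction convergents of `α`. -/
noncomputable def pnum (α : ℝ) : ℕ → ℤ
  | 0 => ⌊α⌋
  | 1 => partQuot α 1 * ⌊α⌋ + 1
  | (n + 2) => partQuot α (n + 2) * pnum α (n + 1) + pnum α n

/-- Distance from `x` to the nearest integer, `‖x‖`. -/
noncomputable def nearestDist (x : ℝ) : ℝ := |x - round x|

/-- The perturbed Sudler product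
`P_{q_k}(α, ε) = ∏_{r=1}^{q_k} 2 |sin (π (r α + (-1)^k ε / q_k))|`. -/
noncomputable def sudlerPert (α : ℝ) (k : ℕ) (ε : ℝ) : ℝ :=
  ∏ r ∈ Finset.Icc 1 (qden α k),
    2 * |Real.sin (Real.pi * (r * α + (-1 : ℝ) ^ k * ε / (qden α k)))|

/-!
Write `N α = P + θ` with `P ∈ ℤ`. The factors `r = N + 1, …, N + q_k` of `P_{N + q_k}(α)` form the
perturbed product `P_{q_k}(α, (-1)^k q_k θ)`, so `P_{N + q_k}(α) ≤ c · P_N(α)` as soon as `q_k |θ| < δ`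
and `k` is one of the indices where the perturbed product is below `c`. Moreover `q_k α - p_k = (-1)^k x_0 ⋯ x_k`, where the `x_i` are the
Gauss-map iterates of `{α}` and `x_i x_{i+1} ≤ 1/2`, so for large `k` the new index `N + q_k` again has
`(N + q_k) α` close to an integer. Iterating from `N = 0` yields `N ≥ m` with `P_N(α) ≤ c^m` for every `m`.
-/

open Topology

noncomputable def gaussIter (α : ℝ) (n : ℕ) : ℝ := gaussMap^[n] (Int.fract α)

lemma gaussIter_succ (α : ℝ) (n : ℕ) : gaussIter α (n + 1) = gaussMap (gaussIter α n) :=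
  Function.iterate_succ_apply' _ _ _

lemma Irrational.fract {x : ℝ} (hx : Irrational x) : Irrational (Int.fract x) :=
  hx.sub_intCast _

lemma Irrational.gaussIter {α : ℝ} (hα : Irrational α) (n : ℕ) : Irrational (gaussIter α n) := by
  induction n with
  | zero => exact hα.fract
  | succ n ih => rw [gaussIter_succ]; exact ih.inv.fract

lemma Irrational.fract_pos {x : ℝ} (hx : Irrational x) : 0 < Int.fract x :=
  (Int.fract_nonneg x).lt_of_ne' hx.fract.ne_zero

lemma gaussIter_pos {α : ℝ} (hα : Irrational α) (n : ℕ) : 0 < gaussIter α n := by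
  cases n with
  | zero => exact hα.fract_pos
  | succ n => rw [gaussIter_succ]; exact (hα.gaussIter n).inv.fract_pos

lemma gaussIter_lt_one (α : ℝ) (n : ℕ) : gaussIter α n < 1 := by
  cases n with
  | zero => exact Int.fract_lt_one α
  | succ n => rw [gaussIter_succ]; exact Int.fract_lt_one _

lemma one_le_floor_inv_gaussIter {α : ℝ} (hα : Irrational α) (n : ℕ) :
    1 ≤ ⌊(gaussIter α n)⁻¹⌋ :=
  Int.le_floor.mpr (by
    exact_mod_cast (one_le_inv₀ (gaussIter_pos hα n)).2 (gaussIter_lt_one α n).le)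

lemma partQuot_succ (α : ℝ) (n : ℕ) : partQuot α (n + 1) = ⌊(gaussIter α n)⁻¹⌋.toNat := rfl

lemma one_le_partQuot {α : ℝ} (hα : Irrational α) (n : ℕ) : 1 ≤ partQuot α (n + 1) := by
  have := one_le_floor_inv_gaussIter hα n
  rw [partQuot_succ]
  omega

lemma partQuot_succ_cast {α : ℝ} (hα : Irrational α) (n : ℕ) :
    (partQuot α (n + 1) : ℝ) = ⌊(gaussIter α n)⁻¹⌋ := by
  have := one_le_floor_inv_gaussIter hα n
  rw [partQuot_succ]
  exact_mod_cast Int.toNat_of_nonneg (by omega)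

lemma gaussIter_succ_eq {α : ℝ} (hα : Irrational α) (n : ℕ) :
    gaussIter α (n + 1) = (gaussIter α n)⁻¹ - partQuot α (n + 1) := by
  rw [gaussIter_succ, gaussMap, Int.fract, partQuot_succ_cast hα]

lemma gaussIter_mul_gaussIter_succ {α : ℝ} (hα : Irrational α) (n : ℕ) :
    gaussIter α n * gaussIter α (n + 1) = 1 - partQuot α (n + 1) * gaussIter α n := by
  rw [gaussIter_succ_eq hα, mul_sub, mul_inv_cancel₀ (gaussIter_pos hα n).ne']
  ring

lemma gaussIter_mul_gaussIter_succ_le_half {α : ℝ} (hα : Irrational α) (n : ℕ) :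
    gaussIter α n * gaussIter α (n + 1) ≤ 1 / 2 := by
  have hx := gaussIter_pos hα n
  have hy := gaussIter_lt_one α (n + 1)
  have ha : (1 : ℝ) ≤ partQuot α (n + 1) := by exact_mod_cast one_le_partQuot hα n
  have hxy := gaussIter_mul_gaussIter_succ hα n
  rcases le_or_gt (gaussIter α n) (1 / 2) with h | h <;> nlinarith

noncomputable def gaussProd (α : ℝ) (n : ℕ) : ℝ := ∏ i ∈ Finset.range (n + 1), gaussIter α i

lemma gaussProd_succ (α : ℝ) (n : ℕ) :
    gaussProd α (n + 1) = gaussProd α n * gaussIter α (n + 1) :=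
  Finset.prod_range_succ _ _

lemma gaussProd_pos {α : ℝ} (hα : Irrational α) (n : ℕ) : 0 < gaussProd α n :=
  Finset.prod_pos fun i _ => gaussIter_pos hα i

lemma gaussProd_antitone {α : ℝ} (hα : Irrational α) : Antitone (gaussProd α) :=
  antitone_nat_of_succ_le fun n => by
    rw [gaussProd_succ]
    exact mul_le_of_le_one_right (gaussProd_pos hα n).le (gaussIter_lt_one α (n + 1)).le

lemma gaussProd_add_two {α : ℝ} (n : ℕ) :
    gaussProd α (n + 2) = gaussProd α n * (gaussIter α (n + 1) * gaussIter α (n + 2)) := by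
  rw [gaussProd_succ, gaussProd_succ, mul_assoc]

lemma gaussProd_two_mul_le {α : ℝ} (hα : Irrational α) (m : ℕ) :
    gaussProd α (2 * m) ≤ (1 / 2) ^ m := by
  induction m with
  | zero => simpa [gaussProd] using (gaussIter_lt_one α 0).le
  | succ m ih =>
    rw [Nat.mul_succ, gaussProd_add_two, pow_succ]
    exact mul_le_mul ih (gaussIter_mul_gaussIter_succ_le_half hα _)
      (by positivity [gaussIter_pos hα (2 * m + 1), gaussIter_pos hα (2 * m + 2)])
      (by positivity)

lemma tendsto_gaussProd_atTop {α : ℝ} (hα : Irrational α) :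
    Tendsto (gaussProd α) atTop (𝓝 0) := by
  have hhalf : Tendsto (fun n : ℕ => ((1 : ℝ) / 2) ^ (n / 2)) atTop (𝓝 0) :=
    (tendsto_pow_atTop_nhds_zero_of_lt_one (by norm_num) (by norm_num)).comp
      (Nat.tendsto_div_const_atTop two_ne_zero)
  refine tendsto_of_tendsto_of_tendsto_of_le_of_le tendsto_const_nhds hhalf
    (fun n => (gaussProd_pos hα n).le) fun n => ?_
  exact (gaussProd_antitone hα (Nat.mul_div_le n 2)).trans (gaussProd_two_mul_le hα _)

lemma qden_pos {α : ℝ} (hα : Irrational α) (n : ℕ) : 0 < qden α n := by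
  induction n using Nat.twoStepInduction with
  | zero => exact Nat.one_pos
  | one => exact one_le_partQuot hα 0
  | more n hn _ => exact Nat.add_pos_right _ hn

lemma qden_add_two_cast (α : ℝ) (n : ℕ) :
    (qden α (n + 2) : ℝ) = partQuot α (n + 2) * qden α (n + 1) + qden α n := by
  rw [qden]; push_cast; rfl

lemma pnum_add_two_cast (α : ℝ) (n : ℕ) :
    (pnum α (n + 2) : ℝ) = partQuot α (n + 2) * pnum α (n + 1) + pnum α n := by
  rw [pnum]; push_cast; rfl

lemma qden_mul_sub_pnum {α : ℝ} (hα : Irrational α) (n : ℕ) :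
    qden α n * α - pnum α n = (-1) ^ n * gaussProd α n := by
  induction n using Nat.twoStepInduction with
  | zero =>
    rw [gaussProd, Finset.prod_range_one]
    simp [qden, pnum, gaussIter]
  | one =>
    have h01 := gaussIter_mul_gaussIter_succ hα 0
    have hx0 : gaussIter α 0 = α - ⌊α⌋ := rfl
    simp only [qden, pnum, gaussProd, Finset.prod_range_succ, Finset.prod_range_zero, one_mul]
    push_cast
    rw [h01, hx0]
    ring
  | more n hn hn1 =>
    rw [qden_add_two_cast, pnum_add_two_cast, gaussProd_add_two,
      gaussIter_mul_gaussIter_succ hα (n + 1)]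
    rw [gaussProd_succ] at hn1
    linear_combination (partQuot α (n + 2) : ℝ) * hn1 + hn

lemma sudler_nonneg (α : ℝ) (N : ℕ) : 0 ≤ sudler α N := by
  unfold sudler; positivity

lemma sudlerPert_nonneg (α : ℝ) (k : ℕ) (ε : ℝ) : 0 ≤ sudlerPert α k ε := by
  unfold sudlerPert; positivity

lemma sudlerPert_le_two_pow (α : ℝ) (k : ℕ) (ε : ℝ) : sudlerPert α k ε ≤ 2 ^ qden α k := by
  calc sudlerPert α k ε ≤ ∏ _r ∈ Finset.Icc 1 (qden α k), (2 : ℝ) :=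
        Finset.prod_le_prod (fun _ _ => by positivity) fun _ _ =>
          mul_le_of_le_one_right zero_le_two (abs_sin_le_one _)
    _ = 2 ^ qden α k := by simp

lemma sudlerPert_le_sSup (α : ℝ) (k : ℕ) {s : Set ℝ} {ε : ℝ} (hε : ε ∈ s) :
    sudlerPert α k ε ≤ sSup ((fun ε => sudlerPert α k ε) '' s) :=
  le_csSup ⟨2 ^ qden α k, Set.forall_mem_image.2 fun _ _ => sudlerPert_le_two_pow α k _⟩
    (Set.mem_image_of_mem _ hε)

lemma sudler_add (α : ℝ) (N M : ℕ) :
    sudler α (N + M) =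
      sudler α N * ∏ r ∈ Finset.Icc 1 M, 2 * |sin (π * (r * α + N * α))| := by
  induction M with
  | zero => simp
  | succ M ih =>
    rw [← add_assoc, sudler, Finset.prod_Icc_succ_top (by omega), ← sudler, ih,
      Finset.prod_Icc_succ_top (by omega), mul_assoc]
    congr 5
    push_cast
    ring

lemma abs_sin_add_int_mul_pi (x : ℝ) (n : ℤ) : |sin (x + n * π)| = |sin x| := by
  rw [sin_add_int_mul_pi, abs_mul, abs_neg_one_zpow, one_mul]

lemma prod_abs_sin_shift_eq_sudlerPert (α : ℝ) (k N : ℕ) {θ : ℝ} {P : ℤ}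
    (hθ : N * α = θ + P) (hq : qden α k ≠ 0) :
    ∏ r ∈ Finset.Icc 1 (qden α k), 2 * |sin (π * (r * α + N * α))| =
      sudlerPert α k ((-1) ^ k * qden α k * θ) := by
  have hsign : ((-1 : ℝ) ^ k) ^ 2 = 1 := by
    rw [← pow_mul]; exact Even.neg_one_pow ⟨k, by ring⟩
  have hε : (-1 : ℝ) ^ k * ((-1) ^ k * qden α k * θ) / qden α k = θ := by
    field_simp
    linear_combination θ * hsign
  refine Finset.prod_congr rfl fun r _ => ?_
  rw [hε, hθ, ← abs_sin_add_int_mul_pi (π * (r * α + θ)) P]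
  ring_nf

lemma exists_sudler_le_pow {α δ c : ℝ} (hα : Irrational α) (hδ : 0 < δ)
    (hsmall : ∃ᶠ k in atTop, ∀ ε ∈ Set.Ioo (-δ) δ, sudlerPert α k ε ≤ c) (m : ℕ) {γ : ℝ}
    (hγ : 0 < γ) : ∃ N, m ≤ N ∧ ∃ P : ℤ, |N * α - P| < γ ∧ sudler α N ≤ c ^ m := by
  induction m generalizing γ with
  | zero => exact ⟨0, le_rfl, 0, by simpa using hγ, by simp [sudler]⟩
  | succ m ih =>
    obtain ⟨k, hk_pert, hk_close⟩ :=
      (hsmall.and_eventually ((tendsto_order.1 (tendsto_gaussProd_atTop hα)).2 _ (half_pos hγ))).exists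
    have hq := qden_pos hα k
    obtain ⟨N, hmN, P, hθ, hN⟩ := ih (γ := min (δ / qden α k) (γ / 2)) (by positivity)
    set θ := N * α - P with hθ_def
    refine ⟨N + qden α k, by omega, P + pnum α k, ?_, ?_⟩
    · calc |((N + qden α k : ℕ) : ℝ) * α - (P + pnum α k : ℤ)|
          = |θ + (-1) ^ k * gaussProd α k| := by
            rw [← qden_mul_sub_pnum hα k, hθ_def]; push_cast; ring_nf
        _ ≤ |θ| + gaussProd α k := by
            grw [abs_add_le, abs_mul, abs_neg_one_pow, one_mul, abs_of_pos (gaussProd_pos hα k)]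
        _ < γ := by linarith [hθ.trans_le (min_le_right _ _)]
    · rw [sudler_add, prod_abs_sin_shift_eq_sudlerPert α k N (θ := θ) (P := P) (by ring) hq.ne', pow_succ]
      refine mul_le_mul hN (hk_pert _ ?_) (sudlerPert_nonneg _ _ _) ((sudler_nonneg α N).trans hN)
      rw [Set.mem_Ioo, ← abs_lt, abs_mul, abs_mul, abs_neg_one_pow, one_mul, Nat.abs_cast,
        ← lt_div_iff₀' (by positivity)]
      exact hθ.trans_le (min_le_left _ _)

lemma liminf_eq_zero_of_frequently_le {ι : Type*} {l : Filter ι} {f : ι → ℝ} {u : ℕ → ℝ}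
    (hf : ∀ i, 0 ≤ f i) (hu : Tendsto u atTop (𝓝 0)) (hfu : ∀ m, ∃ᶠ i in l, f i ≤ u m) :
    liminf f l = 0 :=
  le_antisymm
    (ge_of_tendsto' hu fun m => liminf_le_of_frequently_le (hfu m) (isBoundedUnder_of ⟨0, hf⟩))
    (le_liminf_of_le (IsCoboundedUnder.of_frequently_le (hfu 0)) (Eventually.of_forall hf))

theorem liminf_sudler_eq_zero_of_pert_small_general (α : ℝ) (hα : Irrational α)
    (δ c : ℝ) (hδ : 0 < δ) (hc0 : 0 < c) (hc1 : c < 1)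
    (h : ∀ K : ℕ, ∃ k : ℕ, K ≤ k ∧
      sSup ((fun ε => sudlerPert α k ε) '' Set.Ioo (-δ) δ) < c) :
    Filter.liminf (fun N : ℕ => sudler α N) Filter.atTop = 0 := by
  have hsmall : ∃ᶠ k in atTop, ∀ ε ∈ Set.Ioo (-δ) δ, sudlerPert α k ε ≤ c :=
    frequently_atTop.2 fun K => (h K).imp fun k ⟨hk, hsup⟩ =>
      ⟨hk, fun ε hε => (sudlerPert_le_sSup α k hε).trans hsup.le⟩
  refine liminf_eq_zero_of_frequently_le (sudler_nonneg α)
    (tendsto_pow_atTop_nhds_zero_of_lt_one hc0.le hc1) fun m => frequently_atTop.2 fun K => ?_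
  obtain ⟨N, hN, -, -, hle⟩ := exists_sudler_le_pow hα hδ hsmall (max m K) one_pos
  exact ⟨N, le_of_max_le_right hN,
    hle.trans (pow_le_pow_of_le_one hc0.le hc1.le (le_max_left m K))⟩

/-- If `α` is badly approximable and for some `δ > 0`, `0 < c < 1` and infinitely many `k`
the sup of the perturbed Sudler product `P_{q_k}(α, ·)` over `(-δ, δ)` is `< c`,
then `liminf P_N(α) = 0`. -/
theorem liminf_sudler_eq_zero_of_pert_small (α : ℝ) (hα : Irrational α)
    (B : ℕ) (hB : ∀ n : ℕ, 1 ≤ n → partQuot α n ≤ B)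
    (δ c : ℝ) (hδ : 0 < δ) (hc0 : 0 < c) (hc1 : c < 1)
    (h : ∀ K : ℕ, ∃ k : ℕ, K ≤ k ∧
      sSup ((fun ε => sudlerPert α k ε) '' Set.Ioo (-δ) δ) < c) :
    Filter.liminf (fun N : ℕ => sudler α N) Filter.atTop = 0 :=
  liminf_sudler_eq_zero_of_pert_small_general α hα δ c hδ hc0 hc1 h
end

section
/- For all real numbers N ≥ 2, M and a sequence (a_n) with |a_n| ≤ min{1/2, 1/n} for all n, one has ∏_{n=N}^M (1 + a_n) ≥ 1 - |∑_{n=N}^M a_n| - 1/(N-1). -/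
/-!
Since `log (1 + x) ≥ 1 - 1/(1 + x) = x - x²/(1 + x)`, the bound `|x| ≤ 1/n` gives
`log (1 + a_n) ≥ a_n - (1/(n-1) - 1/n)`. Summing, the error terms telescope to at most `1/(N-1)`,
and `∏ (1 + a_n) = exp (∑ log (1 + a_n)) ≥ 1 + ∑ log (1 + a_n)` finishes the proof.
-/

open Finset Real

lemma sub_le_log_one_add_of_abs_le_one_div {t x : ℝ} (ht : 1 < t) (hx : |x| ≤ 1 / t) :
    x - (1 / (t - 1) - 1 / t) ≤ log (1 + x) := by
  have ht0 : 0 < t := by linarith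
  have habs : |x * t| ≤ 1 := by
    rw [abs_mul, abs_of_pos ht0]; exact (le_div_iff₀ ht0).mp hx
  obtain ⟨hxl, hxu⟩ := abs_le.mp habs
  have hxt : 0 < 1 + x := by nlinarith
  have hsq : x ^ 2 * t ^ 2 ≤ 1 := by nlinarith
  have hden : t - 1 ≤ t * (1 + x) := by nlinarith
  have herr : x ^ 2 / (1 + x) ≤ 1 / (t - 1) - 1 / t := by
    rw [div_sub_div _ _ (by linarith) ht0.ne', div_le_div_iff₀ hxt (by nlinarith)]
    nlinarith [mul_le_mul_of_nonneg_left hden (sq_nonneg x)]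
  calc x - (1 / (t - 1) - 1 / t) ≤ x - x ^ 2 / (1 + x) := by linarith
    _ = 1 - (1 + x)⁻¹ := by field_simp; ring
    _ ≤ log (1 + x) := one_sub_inv_le_log_of_pos hxt

lemma sum_Icc_one_div_pred_sub_one_div_le (N M : ℕ) (hN : 1 ≤ N) :
    ∑ n ∈ Icc N M, (1 / ((n : ℝ) - 1) - 1 / n) ≤ 1 / ((N : ℝ) - 1) := by
  have hN' : (1 : ℝ) ≤ N := by exact_mod_cast hN
  rcases le_or_gt N M with hNM | hMN
  · have htele := sum_Icc_sub (f := fun n : ℕ => -(1 / ((n : ℝ) - 1))) hNM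
    push_cast at htele
    simp only [add_sub_cancel_right, sub_neg_eq_add, neg_add_eq_sub] at htele
    rw [htele]
    have : 0 ≤ 1 / (M : ℝ) := by positivity
    linarith
  · rw [Icc_eq_empty_of_lt hMN, sum_empty]
    exact div_nonneg zero_le_one (by linarith)

lemma one_add_sum_log_le_prod {ι : Type*} (s : Finset ι) (f : ι → ℝ) (hf : ∀ i ∈ s, 0 < f i) :
    1 + ∑ i ∈ s, log (f i) ≤ ∏ i ∈ s, f i := by
  calc 1 + ∑ i ∈ s, log (f i) ≤ exp (∑ i ∈ s, log (f i)) := by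
        linarith [add_one_le_exp (∑ i ∈ s, log (f i))]
    _ = ∏ i ∈ s, f i := by
        rw [exp_sum]
        exact prod_congr rfl fun i hi => exp_log (hf i hi)

theorem prod_one_add_ge_general (N M : ℕ) (hN : 2 ≤ N) (a : ℕ → ℝ)
    (ha : ∀ n ∈ Finset.Icc N M, |a n| ≤ min ((1 : ℝ) / 2) (1 / (n : ℝ))) :
    1 - |∑ n ∈ Finset.Icc N M, a n| - 1 / ((N : ℝ) - 1) ≤
      ∏ n ∈ Finset.Icc N M, (1 + a n) := by
  have hlog : ∀ n ∈ Icc N M, a n - (1 / ((n : ℝ) - 1) - 1 / n) ≤ log (1 + a n) := by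
    intro n hn
    have hn2 : (2 : ℝ) ≤ n := by exact_mod_cast hN.trans (mem_Icc.mp hn).1
    exact sub_le_log_one_add_of_abs_le_one_div (by linarith) ((ha n hn).trans (min_le_right _ _))
  have hpos : ∀ n ∈ Icc N M, 0 < 1 + a n := fun n hn => by
    linarith [(abs_le.mp ((ha n hn).trans (min_le_left _ _))).1]
  have hsum := sum_le_sum hlog
  rw [sum_sub_distrib] at hsum
  have htele := sum_Icc_one_div_pred_sub_one_div_le N M (by omega)
  linarith [neg_abs_le (∑ n ∈ Icc N M, a n), one_add_sum_log_le_prod _ _ hpos]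

/-- If `2 ≤ N ≤ M` and `|a_n| ≤ min (1/2) (1/n)` for `N ≤ n ≤ M`, then
`∏_{n=N}^M (1 + a_n) ≥ 1 - |∑_{n=N}^M a_n| - 1/(N-1)`. -/
theorem prod_one_add_ge (N M : ℕ) (hN : 2 ≤ N) (hNM : N ≤ M) (a : ℕ → ℝ)
    (ha : ∀ n ∈ Finset.Icc N M, |a n| ≤ min ((1 : ℝ) / 2) (1 / (n : ℝ))) :
    1 - |∑ n ∈ Finset.Icc N M, a n| - 1 / ((N : ℝ) - 1) ≤
      ∏ n ∈ Finset.Icc N M, (1 + a n) :=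
  prod_one_add_ge_general N M hN a ha
end
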